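/- If x(t)² + y(t)² > 0 for all t and (x, y, z) solves the Hopf system, then the function t ↦ x(t)² + y(t)² is strictly increasing on any interval where z(t) > 0 and strictly decreasing on any interval where z(t) < 0. -/

import Mathlib

/-! In the Hopf system the horizontal part (x, y) moves by a dilation of rate 32 z / (r² + 4)²
(with r² = x² + y² + z²) composed with a rotation, and a rotation does not change x² + y².
Hence d(x² + y²)/dt = 64 z (x² + y²) / (r² + 4)², which has the sign of z while x² + y² > 0,
and the mean value theorem on the interval gives the monotonicity. -/

theorem hasDerivAt_sq_add_sq_of_dilation_rotation {x y : ℝ → ℝ} {a b t : ℝ}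
    (hx : HasDerivAt x (a * x t - b * y t) t) (hy : HasDerivAt y (a * y t + b * x t) t) :
    HasDerivAt (fun t => x t ^ 2 + y t ^ 2) (2 * a * (x t ^ 2 + y t ^ 2)) t :=
  ((hx.fun_pow 2).fun_add (hy.fun_pow 2)).congr_deriv (by push_cast; ring)

section SignOfDerivative

variable {f f' : ℝ → ℝ} {s : Set ℝ}

theorem strictMonoOn_of_hasDerivAt_pos (hs : s.OrdConnected)
    (hf : ∀ t ∈ s, HasDerivAt f (f' t) t) (hf' : ∀ t ∈ s, 0 < f' t) : StrictMonoOn f s :=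
  strictMonoOn_of_hasDerivWithinAt_pos hs.convex
    (fun t ht => (hf t ht).continuousAt.continuousWithinAt)
    (fun t ht => (hf t (interior_subset ht)).hasDerivWithinAt)
    fun t ht => hf' t (interior_subset ht)

theorem strictAntiOn_of_hasDerivAt_neg (hs : s.OrdConnected)
    (hf : ∀ t ∈ s, HasDerivAt f (f' t) t) (hf' : ∀ t ∈ s, f' t < 0) : StrictAntiOn f s :=
  strictAntiOn_of_hasDerivWithinAt_neg hs.convex
    (fun t ht => (hf t ht).continuousAt.continuousWithinAt)
    (fun t ht => (hf t (interior_subset ht)).hasDerivWithinAt)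
    fun t ht => hf' t (interior_subset ht)

end SignOfDerivative

theorem hopf_hasDerivAt_sq_add_sq {x y z : ℝ → ℝ} {t : ℝ}
    (hx : HasDerivAt x
      (8 * (4 * z t * x t - y t * (x t ^ 2 + y t ^ 2 + z t ^ 2) + 4 * y t) /
        (x t ^ 2 + y t ^ 2 + z t ^ 2 + 4) ^ 2) t)
    (hy : HasDerivAt y
      (8 * (4 * z t * y t + x t * (x t ^ 2 + y t ^ 2 + z t ^ 2) - 4 * x t) /
        (x t ^ 2 + y t ^ 2 + z t ^ 2 + 4) ^ 2) t) :
    HasDerivAt (fun t => x t ^ 2 + y t ^ 2)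
      (64 * (x t ^ 2 + y t ^ 2) / (x t ^ 2 + y t ^ 2 + z t ^ 2 + 4) ^ 2 * z t) t := by
  set D := (x t ^ 2 + y t ^ 2 + z t ^ 2 + 4) ^ 2
  have := hasDerivAt_sq_add_sq_of_dilation_rotation (a := 32 * z t / D)
    (b := 8 * (x t ^ 2 + y t ^ 2 + z t ^ 2 - 4) / D)
    (hx.congr_deriv (by ring)) (hy.congr_deriv (by ring))
  exact this.congr_deriv (by ring)

theorem hopf_cylindrical_radius_monotone_general
    (x y z : ℝ → ℝ)
    (hx : ∀ t, HasDerivAt x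
      (8 * (4 * z t * x t - y t * (x t ^ 2 + y t ^ 2 + z t ^ 2) + 4 * y t) /
        (x t ^ 2 + y t ^ 2 + z t ^ 2 + 4) ^ 2) t)
    (hy : ∀ t, HasDerivAt y
      (8 * (4 * z t * y t + x t * (x t ^ 2 + y t ^ 2 + z t ^ 2) - 4 * x t) /
        (x t ^ 2 + y t ^ 2 + z t ^ 2 + 4) ^ 2) t)
    (hpos : ∀ t, 0 < x t ^ 2 + y t ^ 2)
    (s : Set ℝ) (hs : s.OrdConnected) :
    ((∀ t ∈ s, 0 < z t) → StrictMonoOn (fun t => x t ^ 2 + y t ^ 2) s) ∧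
    ((∀ t ∈ s, z t < 0) → StrictAntiOn (fun t => x t ^ 2 + y t ^ 2) s) := by
  have hderiv t (_ : t ∈ s) := hopf_hasDerivAt_sq_add_sq (hx t) (hy t)
  have hrate_pos (t : ℝ) :
      0 < 64 * (x t ^ 2 + y t ^ 2) / (x t ^ 2 + y t ^ 2 + z t ^ 2 + 4) ^ 2 := by
    have := hpos t
    positivity
  exact ⟨fun hz => strictMonoOn_of_hasDerivAt_pos hs hderiv fun t ht =>
      mul_pos (hrate_pos t) (hz t ht),
    fun hz => strictAntiOn_of_hasDerivAt_neg hs hderiv fun t ht =>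
      mul_neg_of_pos_of_neg (hrate_pos t) (hz t ht)⟩

/-- Along solutions of the Hopf system with x²+y² > 0 everywhere,
x²+y² is strictly increasing on any interval where z > 0 and strictly
decreasing on any interval where z < 0. -/
theorem hopf_cylindrical_radius_monotone
    (x y z : ℝ → ℝ)
    (hx : ∀ t, HasDerivAt x
      (8 * (4 * z t * x t - y t * (x t ^ 2 + y t ^ 2 + z t ^ 2) + 4 * y t) /
        (x t ^ 2 + y t ^ 2 + z t ^ 2 + 4) ^ 2) t)
    (hy : ∀ t, HasDerivAt y
      (8 * (4 * z t * y t + x t * (x t ^ 2 + y t ^ 2 + z t ^ 2) - 4 * x t) /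
        (x t ^ 2 + y t ^ 2 + z t ^ 2 + 4) ^ 2) t)
    (hz : ∀ t, HasDerivAt z
      ((24 * x t ^ 2 + 24 * y t ^ 2 - 8 * z t ^ 2 -
          (x t ^ 2 + y t ^ 2 + z t ^ 2) ^ 2 - 16) /
        (x t ^ 2 + y t ^ 2 + z t ^ 2 + 4) ^ 2) t)
    (hpos : ∀ t, 0 < x t ^ 2 + y t ^ 2)
    (s : Set ℝ) (hs : s.OrdConnected) :
    ((∀ t ∈ s, 0 < z t) → StrictMonoOn (fun t => x t ^ 2 + y t ^ 2) s) ∧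
    ((∀ t ∈ s, z t < 0) → StrictAntiOn (fun t => x t ^ 2 + y t ^ 2) s) :=
  hopf_cylindrical_radius_monotone_general x y z hx hy hpos s hs
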